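/- arXiv:1911.11574 — 5 statements merged into one kernel-verified Lean document; each statement's English description precedes it below -/
import Mathlib

section
/- Let R ≥ 3 be an odd integer. Consider the vertex set V = (ZMod R) ∪ {C} (with C an extra 'center' vertex) and, for each color i ∈ ZMod R, the edge set M_i = {{C, i}} ∪ { {i+p, i−p} : 1 ≤ p ≤ (R−1)/2 }. Then: for every pair of distinct colors i ≠ j, the graph on V with edge set M_i ∪ M_j is connected, if and only if R is a prime number. -/
/-- The color class of color `i` in the standard edge-coloring of the complete graph
`K_{R+1}` on vertices `ZMod R ∪ {C}` (with `none` as the center `C`): the spoke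
`{C, i}` together with the chords `{i + p, i - p}` for `1 ≤ p ≤ (R-1)/2`. -/
def stdMatching (R : ℕ) (i : ZMod R) : Set (Sym2 (Option (ZMod R))) :=
  {s(none, some i)} ∪
    {e | ∃ p : ℕ, 1 ≤ p ∧ p ≤ (R - 1) / 2 ∧
      e = s(some (i + (p : ZMod R)), some (i - (p : ZMod R)))}

/-!
Away from the center, color `i` joins `x` to its reflection `2i - x`. Composing the reflections
in `i` and `j` translates by `2(j - i)`; when `R` is an odd prime this is a generator of `ZMod R`,
so every vertex is reachable. If `1 < m ∣ R`, both reflections in `0` and `m` preserve the class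
`x ≡ 0 (mod m)`, so `{C} ∪ mZ/RZ` is a union of components of the colors `0` and `m` that
misses `1`.
-/

open SimpleGraph

theorem SimpleGraph.Reachable.mem_of_adj_closed {V : Type*} {G : SimpleGraph V} {K : Set V}
    {u v : V} (hr : G.Reachable u v) (hK : ∀ a b, G.Adj a b → a ∈ K → b ∈ K)
    (hu : u ∈ K) : v ∈ K :=
  hr.mem_subgraphVerts (H := (⊤ : G.Subgraph).induce K)
    (fun a ha b hab => ⟨ha, hK a b hab ha, hab⟩) hu

theorem SimpleGraph.reachable_add_nsmul {V A : Type*} [AddMonoid A] {G : SimpleGraph V}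
    {f : A → V} {d : A} (h : ∀ x, G.Reachable (f x) (f (x + d))) (x : A) :
    ∀ n : ℕ, G.Reachable (f x) (f (x + n • d))
  | 0 => by simp
  | n + 1 => (reachable_add_nsmul h x n).trans (by rw [succ_nsmul, ← add_assoc]; exact h _)

section stdMatching

variable {R : ℕ} {i a b : ZMod R}

theorem none_some_mem_stdMatching : s(none, some i) ∈ stdMatching R i :=
  Or.inl rfl

theorem eq_of_none_some_mem_stdMatching (h : s(none, some a) ∈ stdMatching R i) : a = i := by
  rcases h with h | ⟨p, -, -, h⟩
  · simpa using h
  · simp at h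

theorem add_eq_of_some_some_mem_stdMatching (h : s(some a, some b) ∈ stdMatching R i) :
    a + b = 2 * i := by
  rcases h with h | ⟨p, -, -, h⟩
  · simp at h
  · simp only [Sym2.eq_iff, Option.some.injEq] at h
    rcases h with ⟨rfl, rfl⟩ | ⟨rfl, rfl⟩ <;> ring

theorem some_some_mem_stdMatching [NeZero R] (hab : a ≠ b) (h : a + b = 2 * i) :
    s(some a, some b) ∈ stdMatching R i := by
  set c := a - i
  have ha : a = i + c := by ring
  have hb : b = i - c := by linear_combination h - 2 * ha
  have hc : c ≠ 0 := fun hc => hab (by rw [ha, hb, hc, add_zero, sub_zero])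
  -- `c.val = R / 2` would make the chord a loop
  have h2c : 2 * c.val ≠ R := fun h2 => hab <| by
    have : ((2 * c.val : ℕ) : ZMod R) = 0 := by rw [h2, ZMod.natCast_self]
    rw [Nat.cast_mul, ZMod.natCast_zmod_val, Nat.cast_ofNat] at this
    rw [ha, hb]; linear_combination this
  have hv1 : 1 ≤ c.val := ZMod.val_pos.2 hc
  have hvR : c.val < R := ZMod.val_lt c
  right
  by_cases hv : c.val ≤ (R - 1) / 2
  · exact ⟨c.val, hv1, hv, by rw [ZMod.natCast_zmod_val, ha, hb]⟩
  · refine ⟨R - c.val, by omega, by omega, ?_⟩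
    rw [Nat.cast_sub hvR.le, ZMod.natCast_self, ZMod.natCast_zmod_val, ha, hb, Sym2.eq_swap]
    ring_nf

end stdMatching

abbrev twoColorGraph (R : ℕ) (i j : ZMod R) : SimpleGraph (Option (ZMod R)) :=
  fromEdgeSet (stdMatching R i ∪ stdMatching R j)

section twoColorGraph

variable {R : ℕ}

theorem twoColorGraph_comm (i j : ZMod R) : twoColorGraph R i j = twoColorGraph R j i := by
  rw [twoColorGraph, Set.union_comm]

theorem twoColorGraph_adj_none_left (i j : ZMod R) : (twoColorGraph R i j).Adj none (some i) :=
  (fromEdgeSet_adj _).2 ⟨Or.inl none_some_mem_stdMatching, by simp⟩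

theorem twoColorGraph_reachable_reflect [NeZero R] (i j x : ZMod R) :
    (twoColorGraph R i j).Reachable (some x) (some (2 * i - x)) := by
  by_cases hx : x = 2 * i - x
  · rw [← hx]
  · exact ((fromEdgeSet_adj _).2
      ⟨Or.inl (some_some_mem_stdMatching hx (by ring)), by simpa using hx⟩).reachable

theorem twoColorGraph_reachable_translate [NeZero R] (i j x : ZMod R) :
    (twoColorGraph R i j).Reachable (some x) (some (x + 2 * (j - i))) := by
  have hi := twoColorGraph_reachable_reflect i j x
  have hj := twoColorGraph_reachable_reflect j i (2 * i - x)
  rw [← twoColorGraph_comm] at hj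
  convert hi.trans hj using 3
  ring

theorem twoColorGraph_connected [Fact R.Prime] (hR : 3 ≤ R) {i j : ZMod R} (hij : i ≠ j) :
    (twoColorGraph R i j).Connected := by
  have h2 : (2 : ZMod R) ≠ 0 := fun h => by
    rw [← Nat.cast_ofNat, ZMod.natCast_eq_zero_iff] at h
    exact absurd (Nat.le_of_dvd two_pos h) (by omega)
  have hd : 2 * (j - i) ≠ 0 := mul_ne_zero h2 (sub_ne_zero.2 hij.symm)
  refine (connected_iff_exists_forall_reachable _).2 ⟨some i, ?_⟩
  rintro (_ | y)
  · exact (twoColorGraph_adj_none_left i j).symm.reachable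
  · have := reachable_add_nsmul (twoColorGraph_reachable_translate i j) i
      ((y - i) / (2 * (j - i))).val
    rwa [nsmul_eq_mul, ZMod.natCast_zmod_val, div_mul_cancel₀ _ hd, add_sub_cancel] at this

theorem twoColorGraph_elim_eq_zero_of_adj {S : Type*} [Ring S] (φ : ZMod R →+* S)
    {i j : ZMod R} (hi : φ i = 0) (hj : φ j = 0) {u v : Option (ZMod R)}
    (hadj : (twoColorGraph R i j).Adj u v) (hu : u.elim 0 φ = 0) : v.elim 0 φ = 0 := by
  obtain ⟨hmem, hne⟩ := (fromEdgeSet_adj _).1 hadj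
  rcases u with _ | a <;> rcases v with _ | b
  · exact absurd rfl hne
  · rcases hmem with h | h <;> simp [eq_of_none_some_mem_stdMatching h, hi, hj]
  · rfl
  · obtain ⟨k, hk, hab⟩ : ∃ k, φ k = 0 ∧ a + b = 2 * k := by
      rcases hmem with h | h
      exacts [⟨i, hi, add_eq_of_some_some_mem_stdMatching h⟩,
        ⟨j, hj, add_eq_of_some_some_mem_stdMatching h⟩]
    have hsum : φ a + φ b = 0 := by rw [← map_add, hab, map_mul, hk, mul_zero]
    simp only [Option.elim_some] at hu ⊢
    rwa [hu, zero_add] at hsum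

theorem not_connected_twoColorGraph_of_dvd {m : ℕ} (hm : m ∣ R) (hm1 : 1 < m) :
    ¬ (twoColorGraph R 0 m).Connected := fun hconn => by
  have : Fact (1 < m) := ⟨hm1⟩
  let φ := ZMod.castHom hm (ZMod m)
  have h1 := (hconn.preconnected none (some 1)).mem_of_adj_closed
    (K := {v : Option (ZMod R) | v.elim 0 φ = 0})
    (fun _ _ hadj hu => twoColorGraph_elim_eq_zero_of_adj φ (map_zero φ) (by simp [φ]) hadj hu)
    rfl
  exact one_ne_zero ((map_one φ).symm.trans h1)

end twoColorGraph

theorem stmt3_general (R : ℕ) (hR : 3 ≤ R) :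
    (∀ i j : ZMod R, i ≠ j →
      (SimpleGraph.fromEdgeSet (stdMatching R i ∪ stdMatching R j)).Connected) ↔
    R.Prime := by
  refine ⟨fun hconn => ?_, fun hp i j hij => ?_⟩
  · by_contra hp
    obtain ⟨m, hm, hm2, hmR⟩ := Nat.exists_dvd_of_not_prime2 (by omega) hp
    have hm0 : (m : ZMod R) ≠ 0 := by
      rw [Ne, ZMod.natCast_eq_zero_iff]
      exact fun h => absurd (Nat.le_of_dvd (by omega) h) (by omega)
    exact not_connected_twoColorGraph_of_dvd hm hm2 (hconn 0 m hm0.symm)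
  · have : Fact R.Prime := ⟨hp⟩
    exact twoColorGraph_connected hR hij

/-- For odd `R ≥ 3`, the union of any two distinct color classes of the standard
coloring of `K_{R+1}` is a connected graph for every pair of distinct colors
if and only if `R` is prime. -/
theorem stmt3 (R : ℕ) (hR : 3 ≤ R) (hodd : Odd R) :
    (∀ i j : ZMod R, i ≠ j →
      (SimpleGraph.fromEdgeSet (stdMatching R i ∪ stdMatching R j)).Connected) ↔
    R.Prime :=
  stmt3_general R hR
end

section
/- Let R ≥ 2 be an integer. Consider the vertex set V = (ZMod R) × {b, w} and, for each color i ∈ ZMod R, the perfect matching M_i = { {(n, b), (m, w)} : n + m = i in ZMod R }. Then: for every pair of distinct colors i ≠ j, the graph on V with edge set M_i ∪ M_j is connected, if and only if R is a prime number. -/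
/-- The color class of color `i` in the standard edge-coloring of the complete
bipartite graph `K_{R,R}`: black vertex `(n, true)` and white vertex `(m, false)`
are joined by an edge of color `i` iff `n + m = i` in `ZMod R`. -/
def bipMatching (R : ℕ) (i : ZMod R) : Set (Sym2 (ZMod R × Bool)) :=
  {e | ∃ n m : ZMod R, n + m = i ∧ e = s((n, true), (m, false))}

/-- Invariant map: black vertices map to their label, white vertices to `i` minus label. -/
def bipPhi (R : ℕ) (i : ZMod R) (v : ZMod R × Bool) : ZMod R :=
  if v.2 then v.1 else i - v.1

lemma bipAdj {R : ℕ} {i j : ZMod R} {n m : ZMod R} (h : n + m = i ∨ n + m = j) :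
    (SimpleGraph.fromEdgeSet (bipMatching R i ∪ bipMatching R j)).Adj (n, true) (m, false) := by
  rw [SimpleGraph.fromEdgeSet_adj]
  refine ⟨?_, by simp⟩
  rcases h with h | h
  · exact Or.inl ⟨n, m, h, rfl⟩
  · exact Or.inr ⟨n, m, h, rfl⟩

lemma bipStep {R : ℕ} {i j : ZMod R} {u v : ZMod R × Bool}
    (h : (SimpleGraph.fromEdgeSet (bipMatching R i ∪ bipMatching R j)).Adj u v) :
    ∃ k : ℤ, bipPhi R i u - bipPhi R i v = k • (i - j) := by
  rw [SimpleGraph.fromEdgeSet_adj] at h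
  obtain ⟨hmem, -⟩ := h
  rcases hmem with h | h <;> obtain ⟨n, m, hnm, he⟩ := h <;>
      rcases Sym2.eq_iff.mp he with ⟨hu, hv⟩ | ⟨hu, hv⟩ <;> subst hu hv
  · exact ⟨0, show n - (i - m) = (0:ℤ) • (i - j) by rw [← hnm]; simp⟩
  · exact ⟨0, show (i - m) - n = (0:ℤ) • (i - j) by rw [← hnm]; simp⟩
  · exact ⟨-1, show n - (i - m) = (-1:ℤ) • (i - j) by rw [← hnm, zsmul_eq_mul]; push_cast; ring⟩
  · exact ⟨1, show (i - m) - n = (1:ℤ) • (i - j) by rw [← hnm, zsmul_eq_mul]; push_cast; ring⟩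

lemma bipWalk {R : ℕ} {i j : ZMod R} {u v : ZMod R × Bool}
    (h : (SimpleGraph.fromEdgeSet (bipMatching R i ∪ bipMatching R j)).Reachable u v) :
    ∃ k : ℤ, bipPhi R i u - bipPhi R i v = k • (i - j) := by
  obtain ⟨p⟩ := h
  induction p with
  | nil => exact ⟨0, by simp⟩
  | cons h p ih =>
      obtain ⟨k1, hk1⟩ := bipStep h
      obtain ⟨k2, hk2⟩ := ih
      exact ⟨k1 + k2, by rw [add_smul, ← hk1, ← hk2]; ring⟩

lemma bipReach {R : ℕ} (i j : ZMod R) (k : ℕ) :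
    (SimpleGraph.fromEdgeSet (bipMatching R i ∪ bipMatching R j)).Reachable
      (0, true) ((k : ZMod R) * (j - i), true) := by
  induction k with
  | zero =>
      simp only [Nat.cast_zero, zero_mul]
      exact SimpleGraph.Reachable.refl _
  | succ k ih =>
      refine ih.trans ?_
      rw [Nat.cast_succ]
      have h1 : (SimpleGraph.fromEdgeSet (bipMatching R i ∪ bipMatching R j)).Adj
          ((k : ZMod R) * (j - i), true) (i - (k : ZMod R) * (j - i), false) :=
        bipAdj (Or.inl (by ring))
      have h2 : (SimpleGraph.fromEdgeSet (bipMatching R i ∪ bipMatching R j)).Adj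
          (((k : ℕ) + 1 : ZMod R) * (j - i), true) (i - (k : ZMod R) * (j - i), false) :=
        bipAdj (Or.inr (by push_cast; ring))
      exact (h1.reachable).trans (h2.reachable.symm)

/-- For `R ≥ 2`, the union of any two distinct color classes of the standard coloring
of `K_{R,R}` is connected for every pair of distinct colors iff `R` is prime. -/
theorem stmt5 (R : ℕ) (hR : 2 ≤ R) :
    (∀ i j : ZMod R, i ≠ j →
      (SimpleGraph.fromEdgeSet (bipMatching R i ∪ bipMatching R j)).Connected) ↔
    R.Prime := by
  haveI : NeZero R := ⟨by omega⟩
  constructor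
  · intro hconn
    by_contra hp
    obtain ⟨a, hdvd, ha2, haR⟩ := Nat.exists_dvd_of_not_prime2 hR hp
    haveI : Fact (1 < a) := ⟨by omega⟩
    have hi : ((a : ZMod R)) ≠ 0 := by
      rw [Ne, ZMod.natCast_eq_zero_iff]
      intro h
      exact absurd (Nat.le_of_dvd (by omega) h) (by omega)
    have hc := (hconn (a : ZMod R) 0 hi).preconnected (1, true) (0, true)
    obtain ⟨k, hk⟩ := bipWalk hc
    have hk' : (1 : ZMod R) = k • (a : ZMod R) := by
      have : bipPhi R (a : ZMod R) ((1 : ZMod R), true) -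
          bipPhi R (a : ZMod R) ((0 : ZMod R), true) = (1 : ZMod R) := by
        simp [bipPhi]
      rw [this] at hk
      simpa using hk
    have h2 := congrArg (ZMod.castHom hdvd (ZMod a)) hk'
    rw [map_one, map_zsmul, map_natCast, ZMod.natCast_self, smul_zero] at h2
    exact one_ne_zero h2
  · intro hp
    haveI := Fact.mk hp
    intro i j hij
    have hd : j - i ≠ 0 := sub_ne_zero.mpr (Ne.symm hij)
    have key : ∀ x : ZMod R,
        (SimpleGraph.fromEdgeSet (bipMatching R i ∪ bipMatching R j)).Reachable
          (0, true) (x, true) := by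
      intro x
      have := bipReach i j (x * (j - i)⁻¹).val
      rwa [ZMod.natCast_val, ZMod.cast_id, inv_mul_cancel_right₀ hd] at this
    haveI : Nonempty (ZMod R × Bool) := ⟨(0, true)⟩
    refine ⟨fun u v => ?_⟩
    · have reach : ∀ w : ZMod R × Bool,
          (SimpleGraph.fromEdgeSet (bipMatching R i ∪ bipMatching R j)).Reachable
            (0, true) w := by
        rintro ⟨m, b | b⟩
        · exact (key (i - m)).trans (bipAdj (i := i) (j := j) (Or.inl (by ring))).reachable
        · exact key m
      exact (reach u).symm.trans (reach v)
end

section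
/- Let R ≥ 5 and v ≥ 1 be integers and let F : ℕ → ℕ be a finitely supported function with F(1) = 0, satisfying 2·Σ_{n≥1} n·F(n) = R(R+1)·v and 4·Σ_{n≥1} F(n) = R(R−1)·v + 4R. Then 2·F(2) ≥ R(R+1). -/
/-!
Eliminating `v` between the two constraints gives
`∑_{n ≥ 1} (2(R+1) - (R-1)n) F(n) = 2R(R+1)`. The coefficient equals `4` at `n = 2` and is
nonpositive for `n ≥ 3` as soon as `R ≥ 5`, while `F 1 = 0`; hence `4 F(2) ≥ 2R(R+1)`.
-/

theorem Finset.sum_le_of_forall_ne_nonpos {ι M : Type*} [AddCommMonoid M] [PartialOrder M]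
    [IsOrderedAddMonoid M] [DecidableEq ι] {s : Finset ι} {g : ι → M} {a : ι}
    (hg : ∀ b ∈ s, b ≠ a → g b ≤ 0) (ha : 0 ≤ g a) : ∑ b ∈ s, g b ≤ g a := by
  by_cases has : a ∈ s
  · rw [← Finset.add_sum_erase s g has]
    exact add_le_of_nonpos_right <| Finset.sum_nonpos fun b hb =>
      hg b (Finset.mem_of_mem_erase hb) (Finset.ne_of_mem_erase hb)
  · exact (Finset.sum_nonpos fun b hb => hg b hb (ne_of_mem_of_not_mem hb has)).trans ha

theorem Finsupp.sum_support_mul_eq_sum_erase_zero (F : ℕ →₀ ℕ) :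
    ∑ n ∈ F.support, n * F n = ∑ n ∈ F.support.erase 0, n * F n :=
  (Finset.sum_erase _ (zero_mul _)).symm

theorem sum_weighted_faces_eq (R v : ℕ) (hR : 1 ≤ R) (F : ℕ →₀ ℕ)
    (h1 : 2 * ∑ n ∈ F.support, n * F n = R * (R + 1) * v)
    (h2 : 4 * ∑ n ∈ F.support.erase 0, F n = R * (R - 1) * v + 4 * R) :
    ∑ n ∈ F.support.erase 0, (2 * (R + 1) - (R - 1) * n : ℤ) * F n = 2 * R * (R + 1) := by
  rw [F.sum_support_mul_eq_sum_erase_zero] at h1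
  zify [hR] at h1 h2
  simp only [sub_mul, Finset.sum_sub_distrib, mul_assoc, ← Finset.mul_sum]
  refine mul_left_cancel₀ (two_ne_zero' ℤ) ?_
  linear_combination ((R : ℤ) + 1) * h2 - ((R : ℤ) - 1) * h1

theorem stmt13_general (R v : ℕ) (hR : 5 ≤ R) (F : ℕ →₀ ℕ)
    (hF1 : F 1 = 0)
    (h1 : 2 * ∑ n ∈ F.support, n * F n = R * (R + 1) * v)
    (h2 : 4 * ∑ n ∈ F.support.erase 0, F n = R * (R - 1) * v + 4 * R) :
    2 * F 2 ≥ R * (R + 1) := by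
  have hweights := sum_weighted_faces_eq R v (by omega) F h1 h2
  have hbound :
      ∑ n ∈ F.support.erase 0, (2 * (R + 1) - (R - 1) * n : ℤ) * F n ≤ 4 * F 2 := by
    refine (Finset.sum_le_of_forall_ne_nonpos (a := 2) ?_ ?_).trans_eq (by ring)
    · intro n hn hn2
      obtain rfl | hn3 : n = 1 ∨ 3 ≤ n := by have := Finset.ne_of_mem_erase hn; omega
      · simp [hF1]
      · have : (3 : ℤ) ≤ n := by exact_mod_cast hn3
        exact mul_nonpos_of_nonpos_of_nonneg (by nlinarith) (by positivity)
    · ring_nf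
      positivity
  have : (R * (R + 1) : ℤ) ≤ 2 * F 2 := by linarith
  exact_mod_cast this

/-- Arithmetic face-count lemma for prime-complete generalized melons: if `R ≥ 5`,
`v ≥ 1`, and `F : ℕ →₀ ℕ` (the number of `(0i)`-faces of each half-length) satisfies
`F 1 = 0`, `2·Σ_{n} n·F(n) = R(R+1)v` and `4·Σ_{n ≥ 1} F(n) = R(R-1)v + 4R`, then
`2·F(2) ≥ R(R+1)`. -/
theorem stmt13 (R v : ℕ) (hR : 5 ≤ R) (hv : 1 ≤ v) (F : ℕ →₀ ℕ)
    (hF1 : F 1 = 0)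
    (h1 : 2 * ∑ n ∈ F.support, n * F n = R * (R + 1) * v)
    (h2 : 4 * ∑ n ∈ F.support.erase 0, F n = R * (R - 1) * v + 4 * R) :
    2 * F 2 ≥ R * (R + 1) :=
  stmt13_general R v hR F hF1 h1 h2
end

section
/- Let R ≥ 3 be odd. Consider the complete graph on vertex set (ZMod R) ∪ {C} with the standard coloring: the edge {C, n} has color n, and the edge {n, n'} (for n ≠ n' in ZMod R) has the unique color i with 2i = n + n'. Fix k, p ∈ ZMod R with p ≠ 0, and for an ordered pair of vertices (x, y) define its length-two index set S(x,y) = { (i,j) : there exists a vertex w ∉ {x,y} such that the edge {x,w} has color i and the edge {w,y} has color j }. Then S(k−p, k+p) = { (k−p, k+p) } ∪ { (i, i+p) : i ∈ ZMod R, i ≠ k−p, i ≠ k }. -/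
/-- The standard edge-coloring of the complete graph on `ZMod R ∪ {C}` (`none` is the
center `C`): the edge `{C, n}` has color `n`, and the edge `{n, n'}` has the unique
color `i` with `2i = n + n'`, i.e. `i = (R+1)/2 · (n + n')` for odd `R`. -/
def ecol (R : ℕ) : Option (ZMod R) → Option (ZMod R) → ZMod R
  | none, none => 0
  | none, some n => n
  | some n, none => n
  | some n, some n' => (((R + 1) / 2 : ℕ) : ZMod R) * (n + n')

/-- Length-two indexing of polygon edges in the standard coloring of `K_{R+1}`: for
`p ≠ 0`, the set of ordered color pairs `(i, j)` indexing the oriented edge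
`(k-p, k+p)` at length two equals `{(k-p, k+p)} ∪ {(i, i+p) : i ≠ k-p, i ≠ k}`. -/
theorem stmt16 (R : ℕ) (hR : 3 ≤ R) (hodd : Odd R) (k p : ZMod R) (hp : p ≠ 0) :
    {q : ZMod R × ZMod R | ∃ w : Option (ZMod R),
        w ≠ some (k - p) ∧ w ≠ some (k + p) ∧
        ecol R (some (k - p)) w = q.1 ∧ ecol R w (some (k + p)) = q.2} =
      {(k - p, k + p)} ∪
        {q : ZMod R × ZMod R | ∃ i : ZMod R, i ≠ k - p ∧ i ≠ k ∧ q = (i, i + p)} := by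
  have hc : (2 : ZMod R) * (((R + 1) / 2 : ℕ) : ZMod R) = 1 := by
    have h2 : 2 ∣ R + 1 := by
      obtain ⟨m, hm⟩ := hodd
      omega
    have hdc : ((R + 1) / 2 : ℕ) * 2 = R + 1 := Nat.div_mul_cancel h2
    calc (2 : ZMod R) * (((R + 1) / 2 : ℕ) : ZMod R)
        = (((R + 1) / 2 * 2 : ℕ) : ZMod R) := by push_cast; ring
      _ = ((R + 1 : ℕ) : ZMod R) := by rw [hdc]
      _ = 1 := by push_cast; simp [ZMod.natCast_self]
  set c : ZMod R := (((R + 1) / 2 : ℕ) : ZMod R) with hcdef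
  have hinj : ∀ a b : ZMod R, c * a = c * b → a = b := by
    intro a b h
    have h' := congrArg (fun t => (2 : ZMod R) * t) h
    simpa [← mul_assoc, hc] using h'
  have hinj2 : ∀ a b : ZMod R, (2 : ZMod R) * a = (2 : ZMod R) * b → a = b := by
    intro a b h
    have h' := congrArg (fun t => c * t) h
    simpa [← mul_assoc, mul_comm c 2, hc] using h'
  have hself : ∀ a : ZMod R, c * (a + a) = a := by
    intro a
    have : c * (a + a) = (2 * c) * a := by ring
    rw [this, hc, one_mul]
  ext ⟨x, y⟩
  simp only [Set.mem_setOf_eq, Set.mem_union, Set.mem_singleton_iff, Prod.mk.injEq]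
  constructor
  · rintro ⟨w, hw1, hw2, h1, h2⟩
    match w with
    | none =>
      left
      simp only [ecol] at h1 h2
      exact ⟨h1.symm, h2.symm⟩
    | some m =>
      simp only [ecol, ← hcdef] at h1 h2
      right
      refine ⟨x, ?_, ?_, ?_⟩
      · intro hx
        apply hw1
        have : c * (k - p + m) = c * ((k - p) + (k - p)) := by
          rw [h1, hx, hself]
        have := hinj _ _ this
        have : m = k - p := by linear_combination this
        simp [this]
      · intro hx
        apply hw2
        have : c * (k - p + m) = c * (k + k) := by rw [h1, hx, hself]
        have := hinj _ _ this
        have : m = k + p := by linear_combination this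
        simp [this]
      · have hy : y = x + p := by
          rw [← h1, ← h2]
          have : c * (m + (k + p)) - c * (k - p + m) = (2 * c) * p := by ring
          rw [hc] at this
          linear_combination this
        simp [hy]
  · rintro (⟨hx, hy⟩ | ⟨i, hi1, hi2, heq⟩)
    · refine ⟨none, by simp, by simp, ?_, ?_⟩ <;> simp [ecol, hx, hy]
    · obtain ⟨hx, hy⟩ : x = i ∧ y = i + p := by
        simpa [Prod.ext_iff] using heq
      refine ⟨some (2 * i - (k - p)), ?_, ?_, ?_, ?_⟩
      · intro h
        apply hi1
        have : (2 : ZMod R) * i = 2 * (k - p) := by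
          have h' : 2 * i - (k - p) = k - p := by simpa using h
          linear_combination h'
        exact hinj2 _ _ this
      · intro h
        apply hi2
        have : (2 : ZMod R) * i = 2 * k := by
          have h' : 2 * i - (k - p) = k + p := by simpa using h
          linear_combination h'
        exact hinj2 _ _ this
      · simp only [ecol]
        have : c * (k - p + (2 * i - (k - p))) = (2 * c) * i := by ring
        rw [hc] at this
        simpa [hx] using this
      · simp only [ecol]
        have : c * (2 * i - (k - p) + (k + p)) = (2 * c) * (i + p) := by ring
        rw [hc] at this
        simpa [hy] using this
end

section
/- Let R be a prime number with R > 3. Consider the complete graph on vertex set (ZMod R) ∪ {C} with the standard coloring: the edge {C, n} has color n, and the edge {n, n'} (n ≠ n' in ZMod R) has the unique color i with 2i = n + n'. For an ordered pair of adjacent vertices (x, y), define S(x,y) = { (i,j) : ∃ w ∉ {x,y} with color({x,w}) = i and color({w,y}) = j }. If (x, y) and (x', y') are ordered pairs of adjacent vertices such that the edges {x,y} and {x',y'} have the same color and S(x,y) = S(x',y'), then x = x' and y = y'. -/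
/-- The set of ordered pairs of colors indexing the oriented edge `(x, y)` at
length two: `(i, j) ∈ S(x, y)` iff there is an intermediate vertex `w ∉ {x, y}`
with `color {x, w} = i` and `color {w, y} = j`. -/
def lengthTwoIndex (R : ℕ) (x y : Option (ZMod R)) : Set (ZMod R × ZMod R) :=
  {q | ∃ w : Option (ZMod R), w ≠ x ∧ w ≠ y ∧ ecol R x w = q.1 ∧ ecol R w y = q.2}

namespace Stmt17Aux

/-- `2 · (R+1)/2 = 1` in `ZMod R` for odd `R`. -/
lemma two_hf (R : ℕ) (hprime : R.Prime) (hR : 3 < R) :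
    (2 : ZMod R) * (((R + 1) / 2 : ℕ) : ZMod R) = 1 := by
  have hodd : Odd R := hprime.odd_of_ne_two (by omega)
  have hdvd : 2 ∣ R + 1 := (Odd.add_one hodd).two_dvd
  have : ((2 * ((R + 1) / 2) : ℕ) : ZMod R) = ((R + 1 : ℕ) : ZMod R) := by
    rw [Nat.mul_div_cancel' hdvd]
  push_cast [ZMod.natCast_self] at this
  linear_combination this

lemma three_ne (R : ℕ) (hprime : R.Prime) (hR : 3 < R) : (3 : ZMod R) ≠ 0 := by
  intro hcon
  haveI : NeZero R := ⟨by omega⟩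
  have : R ∣ 3 := by
    have := (ZMod.natCast_eq_zero_iff 3 R).mp (by exact_mod_cast hcon)
    exact this
  have := Nat.le_of_dvd (by norm_num) this
  omega

/-- There exists an element avoiding any three given elements of `ZMod R`, `R > 3`. -/
lemma ex3 (R : ℕ) (hR : 3 < R) (a b c : ZMod R) :
    ∃ i : ZMod R, i ≠ a ∧ i ≠ b ∧ i ≠ c := by
  haveI : NeZero R := ⟨by omega⟩
  by_contra hcon
  push_neg at hcon
  have hsub : (Finset.univ : Finset (ZMod R)) ⊆ {a, b, c} := by
    intro x _
    simp only [Finset.mem_insert, Finset.mem_singleton]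
    by_cases hxa : x = a
    · exact Or.inl hxa
    by_cases hxb : x = b
    · exact Or.inr (Or.inl hxb)
    exact Or.inr (Or.inr (hcon x hxa hxb))
  have h1 := Finset.card_le_card hsub
  have h2 : ({a, b, c} : Finset (ZMod R)).card ≤ 3 := by
    apply le_trans (Finset.card_insert_le _ _)
    apply Nat.succ_le_succ
    apply le_trans (Finset.card_insert_le _ _)
    simp
  rw [Finset.card_univ, ZMod.card] at h1
  omega

section

variable (R : ℕ) (hprime : R.Prime) (hR : 3 < R)

include hprime hR

local notation "H" => (((R + 1) / 2 : ℕ) : ZMod R)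

/-- Case: edge `(C, k)` versus edge `(a, b)` (both rim): impossible. -/
lemma LA (k a b : ZMod R) (hcol : k = H * (a + b))
    (hS : lengthTwoIndex R (some a) (some b) = lengthTwoIndex R none (some k)) : False := by
  have h2 := two_hf R hprime hR
  have dbl : ∀ u v : ZMod R, H * u = v → u = 2 * v := by
    intro u v e; rw [← e, ← mul_assoc, h2, one_mul]
  have cancel : ∀ u v : ZMod R, H * u = H * v → u = v := by
    intro u v e
    have := dbl u (H * v) e
    rw [this, ← mul_assoc, h2, one_mul]
  obtain ⟨i, hia, hib, hic⟩ := ex3 R hR a b (2 * a - b)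
  have mem : ((H * (a + i), H * (i + b)) : ZMod R × ZMod R) ∈
      lengthTwoIndex R (some a) (some b) :=
    ⟨some i, by simp [hia], by simp [hib], rfl, rfl⟩
  rw [hS] at mem
  obtain ⟨w, hw1, hw2, e1, e2⟩ := mem
  rcases w with _ | m
  · exact hw1 rfl
  · simp only [ecol] at e1 e2
    -- e1 : m = H * (a + i), e2 : H * (m + k) = H * (i + b)
    have d1 : a + i = 2 * m := dbl _ _ e1.symm
    have d2 : a + b = 2 * k := dbl _ _ hcol.symm
    have d3 : m + k = i + b := cancel _ _ e2
    exact hic (by linear_combination -d1 - d2 - 2 * d3)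

/-- Case: edge `(a', b')` (rim) versus edge `(a, C)`: impossible. -/
lemma LC (a a' b' : ZMod R) (hcol : a = H * (a' + b'))
    (hS : lengthTwoIndex R (some a') (some b') = lengthTwoIndex R (some a) none) : False := by
  have h2 := two_hf R hprime hR
  have dbl : ∀ u v : ZMod R, H * u = v → u = 2 * v := by
    intro u v e; rw [← e, ← mul_assoc, h2, one_mul]
  have cancel : ∀ u v : ZMod R, H * u = H * v → u = v := by
    intro u v e
    have := dbl u (H * v) e
    rw [this, ← mul_assoc, h2, one_mul]
  obtain ⟨i, hia, hib, hic⟩ := ex3 R hR a' b' (2 * b' - a')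
  have mem : ((H * (a' + i), H * (i + b')) : ZMod R × ZMod R) ∈
      lengthTwoIndex R (some a') (some b') :=
    ⟨some i, by simp [hia], by simp [hib], rfl, rfl⟩
  rw [hS] at mem
  obtain ⟨w, hw1, hw2, e1, e2⟩ := mem
  rcases w with _ | m
  · exact hw2 rfl
  · simp only [ecol] at e1 e2
    -- e1 : H * (a + m) = H * (a' + i), e2 : m = H * (i + b')
    have d1 : i + b' = 2 * m := dbl _ _ e2.symm
    have d2 : a' + b' = 2 * a := dbl _ _ hcol.symm
    have d3 : a + m = a' + i := cancel _ _ e1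
    exact hic (by linear_combination -d1 - d2 - 2 * d3)

/-- Case: edge `(C, k)` versus edge `(a, C)`: impossible. -/
lemma LB (k a : ZMod R) (hcol : k = a)
    (hS : lengthTwoIndex R none (some k) = lengthTwoIndex R (some a) none) : False := by
  haveI : Fact R.Prime := ⟨hprime⟩
  haveI : Fact (1 < R) := ⟨by omega⟩
  have h2 := two_hf R hprime hR
  have dbl : ∀ u v : ZMod R, H * u = v → u = 2 * v := by
    intro u v e; rw [← e, ← mul_assoc, h2, one_mul]
  have hik : k + 1 ≠ k := by
    intro h
    exact one_ne_zero (by linear_combination h)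
  have mem : ((k + 1, H * (k + 1 + k)) : ZMod R × ZMod R) ∈
      lengthTwoIndex R none (some k) :=
    ⟨some (k + 1), by simp, by simp [hik], rfl, rfl⟩
  rw [hS] at mem
  obtain ⟨w, hw1, hw2, e1, e2⟩ := mem
  rcases w with _ | m
  · exact hw2 rfl
  · simp only [ecol] at e1 e2
    -- e1 : H * (a + m) = k + 1, e2 : m = H * (k + 1 + k)
    have d1 : a + m = 2 * (k + 1) := dbl _ _ e1
    have d2 : k + 1 + k = 2 * m := dbl _ _ e2.symm
    exact three_ne R hprime hR
      (by linear_combination -2 * d1 - d2 - 2 * hcol)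

/-- Case: two rim edges with the same index set coincide. -/
lemma LD (a b a' b' : ZMod R) (hab : a ≠ b)
    (hS : lengthTwoIndex R (some a) (some b) = lengthTwoIndex R (some a') (some b')) :
    a = a' ∧ b = b' := by
  have h2 := two_hf R hprime hR
  have dbl : ∀ u v : ZMod R, H * u = v → u = 2 * v := by
    intro u v e; rw [← e, ← mul_assoc, h2, one_mul]
  have mem1 : ((a, b) : ZMod R × ZMod R) ∈ lengthTwoIndex R (some a) (some b) :=
    ⟨none, by simp, by simp, rfl, rfl⟩
  rw [hS] at mem1
  obtain ⟨w, hw1, hw2, e1, e2⟩ := mem1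
  rcases w with _ | j
  · simp only [ecol] at e1 e2
    exact ⟨e1.symm, e2.symm⟩
  · simp only [ecol] at e1 e2
    -- e1 : H * (a' + j) = a, e2 : H * (j + b') = b
    have mem2 : ((a', b') : ZMod R × ZMod R) ∈ lengthTwoIndex R (some a') (some b') :=
      ⟨none, by simp, by simp, rfl, rfl⟩
    rw [← hS] at mem2
    obtain ⟨w', hw1', hw2', f1, f2⟩ := mem2
    rcases w' with _ | j'
    · simp only [ecol] at f1 f2
      exact ⟨f1, f2⟩
    · exfalso
      simp only [ecol] at f1 f2
      -- f1 : H * (a + j') = a', f2 : H * (j' + b) = b'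
      have d1 : a' + j = 2 * a := dbl _ _ e1
      have d2 : j + b' = 2 * b := dbl _ _ e2
      have d3 : a + j' = 2 * a' := dbl _ _ f1
      have d4 : j' + b = 2 * b' := dbl _ _ f2
      have h3 : (3 : ZMod R) * (a - b) = 0 := by
        linear_combination -2 * d1 + 2 * d2 - d3 + d4
      haveI : Fact R.Prime := ⟨hprime⟩
      rcases mul_eq_zero.mp h3 with h | h
      · exact three_ne R hprime hR h
      · exact hab (sub_eq_zero.mp h)

end

end Stmt17Aux

open Stmt17Aux in
/-- For prime `R > 3`, two oriented edges of the same color in the prime-complete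
bubble `K_{R+1}` with the standard coloring that have the same length-two index set
coincide: distinct oriented edges of a given color are strongly inequivalent. -/
theorem stmt17 (R : ℕ) (hprime : R.Prime) (hR : 3 < R)
    (x y x' y' : Option (ZMod R)) (h1 : x ≠ y) (h2 : x' ≠ y')
    (hcol : ecol R x y = ecol R x' y')
    (hS : lengthTwoIndex R x y = lengthTwoIndex R x' y') :
    x = x' ∧ y = y' := by
  rcases x with _ | a <;> rcases y with _ | b <;> rcases x' with _ | a' <;> rcases y' with _ | b' <;>
    simp only [ecol] at hcol <;> first
  | (exact absurd rfl h1)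
  | (exact absurd rfl h2)
  | skip
  -- remaining 9 cases
  · -- (none, b) vs (none, b')
    exact ⟨rfl, by rw [hcol]⟩
  · -- (none, b) vs (a', none)
    exact (LB R hprime hR b a' hcol hS).elim
  · -- (none, b) vs (a', b')
    exact (LA R hprime hR b a' b' hcol hS.symm).elim
  · -- (a, none) vs (none, b')
    exact (LB R hprime hR b' a hcol.symm hS.symm).elim
  · -- (a, none) vs (a', none)
    exact ⟨by rw [hcol], rfl⟩
  · -- (a, none) vs (a', b')
    exact (LC R hprime hR a a' b' hcol hS.symm).elim
  · -- (a, b) vs (none, b')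
    exact (LA R hprime hR b' a b hcol.symm hS).elim
  · -- (a, b) vs (a', none)
    exact (LC R hprime hR a' a b hcol.symm hS).elim
  · -- (a, b) vs (a', b')
    have hab : a ≠ b := fun h => h1 (by rw [h])
    obtain ⟨ha, hb⟩ := LD R hprime hR a b a' b' hab hS
    exact ⟨by rw [ha], by rw [hb]⟩
end
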